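/- arXiv:2201.09784 — 4 statements merged into one kernel-verified Lean document; each statement's English description precedes it below -/
import Mathlib

section
/- A DBM system D is in normal form (closed under shortest paths) if and only if for all indices x, y, z one has D[x,z] ≤ D[x,y] + D[y,z]; moreover for a consistent normalized DBM, each bound is tight: for all x, y there exists a solution ψ with ψ(y) − ψ(x) = D[x,y] whenever D[x,y] < ∞. -/
def dbmSol {V : Type*} (D : Option V → Option V → WithTop ℚ) : Set (V → ℚ) :=
  {ψ | ∀ x y : Option V, ((y.elim 0 ψ - x.elim 0 ψ : ℚ) : WithTop ℚ) ≤ D x y}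

def pathWeights {V : Type*} (D : Option V → Option V → WithTop ℚ)
    (x y : Option V) : Set (WithTop ℚ) :=
  {w | ∃ (k : ℕ) (c : Fin (k + 1) → Option V),
        c 0 = x ∧ c (Fin.last k) = y ∧
        w = ∑ i : Fin k, D (c i.castSucc) (c i.succ)}

/-!
Every path weight dominates the direct coefficient by induction on the path using the triangle
inequality, and conversely a two-edge path witnesses the triangle inequality. For tightness, the
potentials `φ` with `φ v ≤ φ u + D[u,v]` are closed under constant shifts and pointwise minima, and
the triangle inequality says that the distance `D[x,·]` from a fixed `x` is such a potential. The
minimum of `D[x,·]` with a sufficiently raised solution is then a finite potential that agrees with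
`D[x,·]` at `x` and at `y`.
-/

section Potential

variable {ι α : Type*}

def IsPotential [Add α] [LE α] (D : ι → ι → α) (φ : ι → α) : Prop :=
  ∀ u v, φ v ≤ φ u + D u v

theorem IsPotential.min [LinearOrder α] [Add α] [AddRightMono α] {D : ι → ι → α} {φ₁ φ₂ : ι → α}
    (h₁ : IsPotential D φ₁) (h₂ : IsPotential D φ₂) :
    IsPotential D fun v => min (φ₁ v) (φ₂ v) := fun u v => by
  rw [← min_add_add_right]
  exact min_le_min (h₁ u v) (h₂ u v)

theorem isPotential_coe_iff {D : ι → ι → WithTop ℚ} {φ : ι → ℚ} :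
    IsPotential D (fun v => (φ v : WithTop ℚ)) ↔
      ∀ u v, ((φ v - φ u : ℚ) : WithTop ℚ) ≤ D u v := by
  refine forall₂_congr fun u v => ?_
  cases D u v with
  | top => simp
  | coe d => dsimp only; norm_cast; rw [sub_le_iff_le_add']

end Potential

theorem WithTop.coe_min_untopD {α : Type*} [LinearOrder α] (a : α) (d : WithTop α) :
    ((min a (d.untopD a) : α) : WithTop α) = min (a : WithTop α) d := by
  cases d <;> simp

section Paths

variable {ι α : Type*} [AddCommMonoid α] [PartialOrder α] [IsOrderedAddMonoid α]

theorem le_sum_of_triangle {D : ι → ι → α} (hdiag : ∀ x, D x x ≤ 0)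
    (htri : ∀ x y z, D x z ≤ D x y + D y z) :
    ∀ (k : ℕ) (c : Fin (k + 1) → ι),
      D (c 0) (c (Fin.last k)) ≤ ∑ i : Fin k, D (c i.castSucc) (c i.succ)
  | 0, c => by simpa using hdiag (c 0)
  | k + 1, c => by
    rw [Fin.sum_univ_succ]
    have htail := le_sum_of_triangle hdiag htri k fun i => c i.succ
    simp only [Fin.succ_last, Fin.succ_castSucc] at htail ⊢
    calc D (c 0) (c (Fin.last (k + 1)))
        ≤ D (c 0) (c 1) + D (c 1) (c (Fin.last (k + 1))) := htri _ _ _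
      _ ≤ _ := add_le_add_right htail _

end Paths

section DBM

variable {V : Type*} {D : Option V → Option V → WithTop ℚ}

theorem mem_pathWeights_self (x y : Option V) : D x y ∈ pathWeights D x y :=
  ⟨1, ![x, y], rfl, rfl, by simp⟩

theorem add_mem_pathWeights (x y z : Option V) : D x y + D y z ∈ pathWeights D x z :=
  ⟨2, ![x, y, z], rfl, rfl, by simp [Fin.sum_univ_two]⟩

theorem isLeast_pathWeights_of_triangle (hdiag : ∀ x, D x x = 0)
    (htri : ∀ x y z, D x z ≤ D x y + D y z) (x y : Option V) :
    IsLeast (pathWeights D x y) (D x y) := by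
  refine ⟨mem_pathWeights_self x y, ?_⟩
  rintro w ⟨k, c, rfl, rfl, rfl⟩
  exact le_sum_of_triangle (fun x => (hdiag x).le) htri k c

theorem triangle_of_isLeast_pathWeights (h : ∀ x y, IsLeast (pathWeights D x y) (D x y))
    (x y z : Option V) : D x z ≤ D x y + D y z :=
  (h x z).2 (add_mem_pathWeights x y z)

theorem isPotential_of_mem_dbmSol {ψ : V → ℚ} (hψ : ψ ∈ dbmSol D) :
    IsPotential D fun v => ((v.elim 0 ψ : ℚ) : WithTop ℚ) :=
  isPotential_coe_iff.2 hψ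

theorem exists_mem_dbmSol_of_isPotential {φ : Option V → ℚ}
    (hφ : IsPotential D fun v => (φ v : WithTop ℚ)) :
    ∃ ψ ∈ dbmSol D, ∀ x y : Option V, y.elim 0 ψ - x.elim 0 ψ = φ y - φ x := by
  have helim (w : Option V) : w.elim 0 (fun v => φ (some v) - φ none) = φ w - φ none := by
    cases w <;> simp
  refine ⟨fun v => φ (some v) - φ none, fun u v => ?_, fun x y => ?_⟩
  · simpa [helim] using isPotential_coe_iff.1 hφ u v
  · simp only [helim, sub_sub_sub_cancel_right]

theorem exists_mem_dbmSol_sub_eq (hdiag : ∀ x, D x x = 0)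
    (htri : ∀ x y z, D x z ≤ D x y + D y z) (hsol : (dbmSol D).Nonempty)
    {x y : Option V} {q : ℚ} (hq : D x y = q) :
    ∃ ψ ∈ dbmSol D, y.elim 0 ψ - x.elim 0 ψ = q := by
  obtain ⟨ψ₀, hψ₀⟩ := hsol
  set C := max (-x.elim 0 ψ₀) (q - y.elim 0 ψ₀)
  let g : Option V → ℚ := fun v => v.elim 0 ψ₀ + C
  have hg : IsPotential D fun v => (g v : WithTop ℚ) :=
    isPotential_coe_iff.2 fun u v => by
      simpa only [g, add_sub_add_right_eq_sub] using isPotential_coe_iff.1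
        (isPotential_of_mem_dbmSol hψ₀) u v
  let φ : Option V → ℚ := fun v => min (g v) ((D x v).untopD (g v))
  have hφ : IsPotential D fun v => (φ v : WithTop ℚ) := by
    simpa only [φ, WithTop.coe_min_untopD] using hg.min (htri x)
  have hφx : φ x = 0 := by
    have : 0 ≤ g x := by linarith [le_max_left (-x.elim 0 ψ₀) (q - y.elim 0 ψ₀)]
    simp [φ, hdiag x, this]
  have hφy : φ y = q := by
    have : q ≤ g y := by linarith [le_max_right (-x.elim 0 ψ₀) (q - y.elim 0 ψ₀)]
    simp [φ, hq, this]
  obtain ⟨ψ, hψ, hsub⟩ := exists_mem_dbmSol_of_isPotential hφ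
  exact ⟨ψ, hψ, by rw [hsub, hφx, hφy, sub_zero]⟩

end DBM

theorem dbm_normal_iff_triangle_and_tight_general {V : Type*}
    (D : Option V → Option V → WithTop ℚ)
    (hdiag : ∀ x : Option V, D x x = 0) :
    ((∀ x y : Option V, IsLeast (pathWeights D x y) (D x y)) ↔
        ∀ x y z : Option V, D x z ≤ D x y + D y z) ∧
    ((dbmSol D).Nonempty →
      (∀ x y : Option V, IsLeast (pathWeights D x y) (D x y)) →
      ∀ (x y : Option V) (q : ℚ), D x y = (q : WithTop ℚ) →
        ∃ ψ ∈ dbmSol D, (y.elim 0 ψ - x.elim 0 ψ : ℚ) = q) :=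
  ⟨⟨triangle_of_isLeast_pathWeights, isLeast_pathWeights_of_triangle hdiag⟩,
    fun hsol hnormal _ _ _ hq =>
      exists_mem_dbmSol_sub_eq hdiag (triangle_of_isLeast_pathWeights hnormal) hsol hq⟩

/-- a DBM with zero diagonal is in normal form (each coefficient
is the minimal path weight) iff the triangle inequality holds; moreover, for a
consistent normalized DBM every finite bound is tight. -/
theorem dbm_normal_iff_triangle_and_tight {V : Type*} [Fintype V]
    (D : Option V → Option V → WithTop ℚ)
    (hdiag : ∀ x : Option V, D x x = 0) :
    ((∀ x y : Option V, IsLeast (pathWeights D x y) (D x y)) ↔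
        ∀ x y z : Option V, D x z ≤ D x y + D y z) ∧
    ((dbmSol D).Nonempty →
      (∀ x y : Option V, IsLeast (pathWeights D x y) (D x y)) →
      ∀ (x y : Option V) (q : ℚ), D x y = (q : WithTop ℚ) →
        ∃ ψ ∈ dbmSol D, (y.elim 0 ψ - x.elim 0 ψ : ℚ) = q) :=
  dbm_normal_iff_triangle_and_tight_general D hdiag
end

section
/- Projecting the set of solutions of a DBM system onto the difference of two variables yields exactly an interval: if D is a consistent normalized DBM over V ∪ {•} and t₁, t₂ ∈ V, then { ψ(t₂) − ψ(t₁) : ψ ∈ ⌉D⌈ } = [−D[t₂,t₁], D[t₁,t₂]] (intersected with ℚ, with infinite bounds interpreted as unboundedness). -/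
/-!
A normalized consistent DBM satisfies the triangle inequality and has zero diagonal. Fixing
`ψ(t₂) − ψ(t₁) = d` amounts to adding the edges `t₁ → t₂` of weight `d` and `t₂ → t₁` of weight
`−d`; when `d` lies in the interval neither edge closes a negative cycle, and the closure after
adding a single edge `a → b` has the explicit form `min (E x y) (E x a + w + E b y)`. It remains
to see that every closed DBM with zero diagonal has a solution: adding the edges `none → v` one
at a time, with weights chosen so that no negative cycle appears, makes the row of `none` finite,
and that row is then a solution (the shortest-path potential).
-/

section ClosedDBM

variable {ι α : Type*} [AddCommMonoid α] [LinearOrder α]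

structure IsClosedDBM (E : ι → ι → α) : Prop where
  triangle : ∀ x y z, E x z ≤ E x y + E y z
  diag_eq_zero : ∀ x, E x x = 0

def addEdge (E : ι → ι → α) (a b : ι) (w : α) : ι → ι → α :=
  fun x y => min (E x y) (E x a + w + E b y)

variable {E : ι → ι → α} {a b : ι} {w : α}

lemma addEdge_le : addEdge E a b w ≤ E :=
  fun _ _ => min_le_left _ _

lemma IsClosedDBM.addEdge_apply_self (hE : IsClosedDBM E) : addEdge E a b w a b = min (E a b) w := by
  simp only [addEdge, hE.diag_eq_zero, zero_add, add_zero]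

variable [IsOrderedAddMonoid α]

lemma isClosedDBM_addEdge (hE : IsClosedDBM E) (hw : 0 ≤ w + E b a) :
    IsClosedDBM (addEdge E a b w) := by
  refine ⟨fun x y z => ?_, fun x => min_eq_left ?_ |>.trans (hE.diag_eq_zero x)⟩
  · simp only [addEdge]
    rcases min_choice (E x y) (E x a + w + E b y) with hxy | hxy <;>
      rcases min_choice (E y z) (E y a + w + E b z) with hyz | hyz <;> rw [hxy, hyz]
    · exact min_le_of_left_le (hE.triangle x y z)
    · refine min_le_of_right_le ?_
      calc E x a + w + E b z ≤ E x y + E y a + w + E b z := by gcongr; exact hE.triangle x y a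
        _ = E x y + (E y a + w + E b z) := by abel
    · refine min_le_of_right_le ?_
      calc E x a + w + E b z ≤ E x a + w + (E b y + E y z) := by gcongr; exact hE.triangle b y z
        _ = E x a + w + E b y + E y z := by abel
    · refine min_le_of_right_le ?_
      calc E x a + w + E b z = E x a + w + 0 + E b z := by rw [add_zero]
        _ ≤ E x a + w + (w + (E b y + E y a)) + E b z := by
          gcongr; exact hw.trans (by gcongr; exact hE.triangle b y a)
        _ = E x a + w + E b y + (E y a + w + E b z) := by abel
  · rw [hE.diag_eq_zero]
    calc (0 : α) ≤ w + E b a := hw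
      _ ≤ w + (E b x + E x a) := by gcongr; exact hE.triangle b x a
      _ = E x a + w + E b x := by abel

end ClosedDBM

lemma coe_sub_le_of_coe_le_coe_add {a b : ℚ} {c : WithTop ℚ} (h : (b : WithTop ℚ) ≤ a + c) :
    ((b - a : ℚ) : WithTop ℚ) ≤ c := by
  induction c with
  | top => exact le_top
  | coe c =>
    rw [← WithTop.coe_add, WithTop.coe_le_coe] at h
    exact WithTop.coe_le_coe.mpr (by linarith)

lemma exists_nonneg_coe_add (c : WithTop ℚ) : ∃ w : ℚ, 0 ≤ (w : WithTop ℚ) + c := by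
  induction c with
  | top => exact ⟨0, le_top⟩
  | coe c => exact ⟨-c, by rw [← WithTop.coe_add, neg_add_cancel, WithTop.coe_zero]⟩

section Solutions

variable {V : Type*} {E : Option V → Option V → WithTop ℚ}

lemma dbmSol_mono {F : Option V → Option V → WithTop ℚ} (h : F ≤ E) : dbmSol F ⊆ dbmSol E :=
  fun _ hψ x y => (hψ x y).trans (h x y)

lemma coe_sub_le_of_mem_dbmSol {ψ : V → ℚ} (hψ : ψ ∈ dbmSol E) (x y : V) :
    ((ψ y - ψ x : ℚ) : WithTop ℚ) ≤ E (some x) (some y) :=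
  hψ (some x) (some y)

lemma IsClosedDBM.mem_dbmSol_of_row_ne_top (hE : IsClosedDBM E) (hrow : ∀ x, E none x ≠ ⊤) :
    (fun v => (E none (some v)).untop (hrow (some v))) ∈ dbmSol E := by
  have hpot : ∀ x : Option V,
      ((x.elim 0 fun v => (E none (some v)).untop (hrow (some v)) : ℚ) : WithTop ℚ) = E none x
    | none => (hE.diag_eq_zero none).symm
    | some v => WithTop.coe_untop _ _
  intro x y
  apply coe_sub_le_of_coe_le_coe_add
  rw [hpot, hpot]
  exact hE.triangle none x y

lemma IsClosedDBM.exists_row_ne_top [Fintype V] (hE : IsClosedDBM E) :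
    ∃ F, IsClosedDBM F ∧ F ≤ E ∧ ∀ x, F none x ≠ ⊤ := by
  suffices h : ∀ S : Finset V, ∃ F, IsClosedDBM F ∧ F ≤ E ∧ ∀ v ∈ S, F none (some v) ≠ ⊤ by
    obtain ⟨F, hF, hFE, hrow⟩ := h Finset.univ
    refine ⟨F, hF, hFE, fun x => ?_⟩
    cases x with
    | none => simp [hF.diag_eq_zero]
    | some v => exact hrow v (Finset.mem_univ v)
  classical
  intro S
  induction S using Finset.induction_on with
  | empty => exact ⟨E, hE, le_rfl, by simp⟩
  | @insert v S _ ih =>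
    obtain ⟨F, hF, hFE, hrow⟩ := ih
    obtain ⟨w, hw⟩ := exists_nonneg_coe_add (F (some v) none)
    refine ⟨addEdge F none (some v) w, isClosedDBM_addEdge hF hw, addEdge_le.trans hFE, ?_⟩
    simp only [Finset.mem_insert, forall_eq_or_imp]
    refine ⟨ne_top_of_le_ne_top (WithTop.coe_ne_top (a := w)) ?_, fun u hu =>
      ne_top_of_le_ne_top (hrow u hu) (addEdge_le _ _)⟩
    rw [hF.addEdge_apply_self]
    exact min_le_right _ _

lemma IsClosedDBM.dbmSol_nonempty [Fintype V] (hE : IsClosedDBM E) : (dbmSol E).Nonempty :=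
  let ⟨_, hF, hFE, hrow⟩ := hE.exists_row_ne_top
  ⟨_, dbmSol_mono hFE (hF.mem_dbmSol_of_row_ne_top hrow)⟩

lemma isClosedDBM_of_isLeast_pathWeights (hcons : (dbmSol E).Nonempty)
    (hnorm : ∀ x y, IsLeast (pathWeights E x y) (E x y)) : IsClosedDBM E where
  triangle x y z := (hnorm x z).2 ⟨2, ![x, y, z], rfl, rfl, by simp [Fin.sum_univ_two]⟩
  diag_eq_zero x := by
    obtain ⟨ψ, hψ⟩ := hcons
    refine le_antisymm ((hnorm x x).2 ⟨0, fun _ => x, rfl, rfl, by simp⟩) ?_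
    simpa using hψ x x

lemma IsClosedDBM.exists_mem_dbmSol_sub_eq [Fintype V] (hE : IsClosedDBM E) {t₁ t₂ : V} {d : ℚ}
    (hlow : ((-d : ℚ) : WithTop ℚ) ≤ E (some t₂) (some t₁))
    (hup : (d : WithTop ℚ) ≤ E (some t₁) (some t₂)) :
    ∃ ψ ∈ dbmSol E, d = ψ t₂ - ψ t₁ := by
  set E₁ := addEdge E (some t₁) (some t₂) d
  set E₂ := addEdge E₁ (some t₂) (some t₁) (-d : ℚ)
  have hE₁ : IsClosedDBM E₁ := isClosedDBM_addEdge hE <| by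
    rw [← WithTop.coe_zero, ← neg_add_cancel d, WithTop.coe_add, add_comm]; gcongr
  have hE₁₂ : E₁ (some t₁) (some t₂) = d := hE.addEdge_apply_self.trans (min_eq_right hup)
  have hE₂ : IsClosedDBM E₂ := isClosedDBM_addEdge hE₁ <| by
    rw [hE₁₂, ← WithTop.coe_add, neg_add_cancel, WithTop.coe_zero]
  obtain ⟨ψ, hψ⟩ := hE₂.dbmSol_nonempty
  have h₁₂ : ((ψ t₂ - ψ t₁ : ℚ) : WithTop ℚ) ≤ d :=
    (coe_sub_le_of_mem_dbmSol hψ t₁ t₂).trans ((addEdge_le _ _).trans hE₁₂.le)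
  have h₂₁ : ((ψ t₁ - ψ t₂ : ℚ) : WithTop ℚ) ≤ (-d : ℚ) :=
    (coe_sub_le_of_mem_dbmSol hψ t₂ t₁).trans <|
      hE₁.addEdge_apply_self.trans_le (min_le_right _ _)
  refine ⟨ψ, dbmSol_mono (addEdge_le.trans addEdge_le) hψ, ?_⟩
  rw [WithTop.coe_le_coe] at h₁₂ h₂₁
  linarith

end Solutions

/-- for a consistent normalized DBM, the projection of the
solution set onto the difference `t₂ − t₁` is exactly the interval
`[−D[t₂,t₁], D[t₁,t₂]]` (infinite bounds meaning unboundedness). -/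
theorem dbm_projection_interval {V : Type*} [Fintype V]
    (D : Option V → Option V → WithTop ℚ)
    (hcons : (dbmSol D).Nonempty)
    (hnorm : ∀ x y : Option V, IsLeast (pathWeights D x y) (D x y))
    (t₁ t₂ : V) :
    {d : ℚ | ∃ ψ ∈ dbmSol D, d = ψ t₂ - ψ t₁} =
      {d : ℚ | ((-d : ℚ) : WithTop ℚ) ≤ D (some t₂) (some t₁) ∧
               ((d : ℚ) : WithTop ℚ) ≤ D (some t₁) (some t₂)} := by
  have hD := isClosedDBM_of_isLeast_pathWeights hcons hnorm
  ext d
  constructor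
  · rintro ⟨ψ, hψ, rfl⟩
    exact ⟨by simpa using coe_sub_le_of_mem_dbmSol hψ t₂ t₁, coe_sub_le_of_mem_dbmSol hψ t₁ t₂⟩
  · rintro ⟨hlow, hup⟩
    exact hD.exists_mem_dbmSol_sub_eq hlow hup
end

section
/- The initial DBM system of an ITPN, D̃⁰ given by tmin(t_i) ≤ t̲_i ≤ tmax(t_i) for all enabled t_i and t̲_j − t̲_i ≤ tmax(t_j) − tmin(t_i) for all distinct enabled t_i, t_j, is the normal form of the interval system D⁰ given by tmin(t_i) ≤ t̲_i ≤ tmax(t_i) alone; in particular ⌉D̃⁰⌈ = ⌉D⁰⌈. -/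
/-- The interval system `D⁰`: `tmin(t) ≤ t̲ ≤ tmax(t)` only. -/
def initIntervalDBM {V : Type*} [DecidableEq V] (tmin tmax : V → ℚ) :
    Option V → Option V → WithTop ℚ
  | none, none => 0
  | none, some j => ((tmax j : ℚ) : WithTop ℚ)
  | some i, none => ((-tmin i : ℚ) : WithTop ℚ)
  | some i, some j => if i = j then 0 else ⊤

/-- The initial DBM system `D̃⁰` with the difference constraints
`t̲_j − t̲_i ≤ tmax(t_j) − tmin(t_i)` added. -/
def initFullDBM {V : Type*} [DecidableEq V] (tmin tmax : V → ℚ) :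
    Option V → Option V → WithTop ℚ
  | none, none => 0
  | none, some j => ((tmax j : ℚ) : WithTop ℚ)
  | some i, none => ((-tmin i : ℚ) : WithTop ℚ)
  | some i, some j => if i = j then 0 else ((tmax j - tmin i : ℚ) : WithTop ℚ)

lemma mem_interval_sol {V : Type*} [DecidableEq V] (tmin tmax : V → ℚ)
    (ψ : V → ℚ) (hψ : ∀ i, tmin i ≤ ψ i ∧ ψ i ≤ tmax i) :
    ψ ∈ dbmSol (initIntervalDBM tmin tmax) := by
  intro x y
  match x, y with
  | none, none => simp [initIntervalDBM]
  | none, some j =>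
    simpa [initIntervalDBM] using (hψ j).2
  | some i, none =>
    show ((0 - ψ i : ℚ) : WithTop ℚ) ≤ ((-tmin i : ℚ) : WithTop ℚ)
    exact_mod_cast by linarith [(hψ i).1]
  | some i, some j =>
    by_cases h : i = j <;> simp [initIntervalDBM, h]

/-- `D̃⁰` is the normal form of the interval system `D⁰`: both
have the same solution set, and `D̃⁰` is coefficient-wise minimal among DBMs
with this solution set. -/
theorem init_dbm_is_normal_form {V : Type*} [Fintype V] [DecidableEq V]
    (tmin tmax : V → ℚ) (hbd : ∀ i, 0 ≤ tmin i ∧ tmin i ≤ tmax i) :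
    dbmSol (initFullDBM tmin tmax) = dbmSol (initIntervalDBM tmin tmax) ∧
      ∀ D' : Option V → Option V → WithTop ℚ,
        dbmSol D' = dbmSol (initIntervalDBM tmin tmax) →
        ∀ x y : Option V, initFullDBM tmin tmax x y ≤ D' x y := by
  have hfull_le : ∀ x y : Option V, initFullDBM tmin tmax x y ≤ initIntervalDBM tmin tmax x y := by
    intro x y
    match x, y with
    | none, none => exact le_refl _
    | none, some j => exact le_refl _
    | some i, none => exact le_refl _
    | some i, some j =>
      by_cases h : i = j <;> simp [initFullDBM, initIntervalDBM, h]
  constructor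
  · ext ψ
    constructor
    · intro hψ x y
      exact le_trans (hψ x y) (hfull_le x y)
    · intro hψ x y
      have hub : ∀ j, ψ j ≤ tmax j := by
        intro j
        have h := hψ none (some j)
        simpa [initIntervalDBM] using h
      have hlb : ∀ i, tmin i ≤ ψ i := by
        intro i
        have h : ((0 - ψ i : ℚ) : WithTop ℚ) ≤ ((-tmin i : ℚ) : WithTop ℚ) := hψ (some i) none
        have := WithTop.coe_le_coe.mp h
        linarith
      match x, y with
      | none, none => simp [initFullDBM]
      | none, some j => simpa [initFullDBM] using hub j
      | some i, none =>
        show ((0 - ψ i : ℚ) : WithTop ℚ) ≤ ((-tmin i : ℚ) : WithTop ℚ)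
        exact_mod_cast by linarith [hlb i]
      | some i, some j =>
        by_cases h : i = j
        · simp [initFullDBM, h]
        · have h2 : ψ j - ψ i ≤ tmax j - tmin i := sub_le_sub (hub j) (hlb i)
          show ((ψ j - ψ i : ℚ) : WithTop ℚ) ≤ initFullDBM tmin tmax (some i) (some j)
          simp only [initFullDBM, if_neg h]
          exact_mod_cast h2
  · intro D' hD' x y
    have hmem : ∀ ψ : V → ℚ, (∀ i, tmin i ≤ ψ i ∧ ψ i ≤ tmax i) → ψ ∈ dbmSol D' := by
      intro ψ h
      rw [hD']
      exact mem_interval_sol tmin tmax ψ h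
    match x, y with
    | none, none =>
      have h := hmem tmin (fun i => ⟨le_refl _, (hbd i).2⟩) none none
      simpa [initFullDBM] using h
    | none, some j =>
      have h := hmem tmax (fun i => ⟨(hbd i).2, le_refl _⟩) none (some j)
      simpa [initFullDBM] using h
    | some i, none =>
      have h := hmem tmin (fun i => ⟨le_refl _, (hbd i).2⟩) (some i) none
      show ((-tmin i : ℚ) : WithTop ℚ) ≤ D' (some i) none
      simpa using h
    | some i, some j =>
      by_cases hij : i = j
      · subst hij
        have h := hmem tmin (fun i => ⟨le_refl _, (hbd i).2⟩) (some i) (some i)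
        simpa [initFullDBM] using h
      · set ψ : V → ℚ := fun k => if k = j then tmax j else tmin k with hψdef
        have h := hmem ψ (fun k => by
          by_cases hk : k = j
          · subst hk; simp [hψdef, (hbd k).2]
          · simp [hψdef, hk, (hbd k).2]) (some i) (some j)
        have hi : ψ i = tmin i := by simp [hψdef, hij]
        have hj : ψ j = tmax j := by simp [hψdef]
        simpa [initFullDBM, hij, hi, hj] using h
end

section
/- Overapproximation is preserved by one firing step of the DBM class-graph algorithm: assume the exact class E^{n−1} = (M, D) and DBM class Ẽ^{n−1} = (M, D̃) satisfy ⌉D⌈ ⊆ ⌉D̃⌈ with D̃ the tightest normalized DBM of its solution set. If t_f is firable from E^{n−1} (so D ∧ (∀t ∈ Ta(M), t̲_f ≤ t̲) is consistent), then β̃[t_f] = min over activated t of D̃[t_f,t] is ≥ 0, i.e., t_f is also firable from Ẽ^{n−1}. -/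
/-- if the exact class `(M, D)` with state space `SD` satisfies
`SD ⊆ ⌉D̃⌈` where `D̃` is the tightest normalized DBM of its solution set,
and `t_f` is firable from the exact class, then
`β̃[t_f] = min_{t ∈ Ta} D̃[t_f,t] ≥ 0`, i.e. `t_f` is firable from the DBM class. -/
theorem firable_step_overapprox {T : Type*} [Fintype T] [DecidableEq T]
    (SD : Set (T → ℚ)) (Dt : Option T → Option T → WithTop ℚ)
    (Ta : Finset T) (tf : T) (htf : tf ∈ Ta)
    (hover : SD ⊆ dbmSol Dt)
    (htight : ∀ x y : Option T, ∀ q : ℚ,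
      (∀ ψ ∈ dbmSol Dt, (y.elim 0 ψ - x.elim 0 ψ : ℚ) ≤ q) →
      Dt x y ≤ (q : WithTop ℚ))
    (hfir : ∃ ψ ∈ SD, ∀ t ∈ Ta, ψ tf ≤ ψ t) :
    0 ≤ Ta.inf' ⟨tf, htf⟩ (fun t => Dt (some tf) (some t)) := by
  obtain ⟨ψ, hψ, hmin⟩ := hfir
  apply Finset.le_inf'
  intro t ht
  have h1 : ((ψ t - ψ tf : ℚ) : WithTop ℚ) ≤ Dt (some tf) (some t) :=
    hover hψ (some tf) (some t)
  refine le_trans ?_ h1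
  have : (0 : ℚ) ≤ ψ t - ψ tf := by linarith [hmin t ht]
  exact_mod_cast this
end
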